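/- arXiv:2407.02971 — 6 statements merged into one kernel-verified Lean document; each statement's English description precedes it below -/
import Mathlib

section
/- Let (X,ρ) be a symmetric rack, A a ℤ(X,ρ)-module with constant structure maps φ, ψ, η, and α ∈ Z²_SR((X,ρ);A). Then Aut_A(E(F,α)) is a subgroup of the group of all symmetric rack automorphisms of E(F,α). Explicitly: the identity lies in Aut_A(E(F,α)); if ξ(x,a) = (ζ(x), λ(x)+θ(a)) and ξ′(x,a) = (ζ′(x), λ′(x)+θ′(a)) belong to Aut_A(E(F,α)), then (ξ∘ξ′)(x,a) = (ζζ′(x), (λ∘ζ′ + θ∘λ′)(x) + θθ′(a)) belongs to Aut_A(E(F,α)); and the inverse of ξ is the element ξ̄ of Aut_A(E(F,α)) given by ξ̄(x,a) = (ζ⁻¹(x), θ⁻¹(−λ(ζ⁻¹(x)) + a)). -/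
/-- `(X, op, rho)` is a symmetric rack: `op` is a rack operation and `rho` is a good
involution on it. -/
def IsSymRack {X : Type*} (op : X → X → X) (rho : X → X) : Prop :=
  (∀ x y z, op (op x y) z = op (op x z) (op y z)) ∧
  (∀ y, Function.Bijective (fun x => op x y)) ∧
  (∀ x, rho (rho x) = x) ∧
  (∀ x y, rho (op x y) = op (rho x) y) ∧
  (∀ x y, op (op x (rho y)) y = x)

/-- `A` (with the additive endomorphisms `φ, ψ, η`) is a `ℤ(X,ρ)`-module with constant
structure maps. -/
def IsConstModule {A : Type*} [AddCommGroup A] (φ ψ η : A →+ A) : Prop :=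
  (∀ a, φ (ψ a) = ψ (φ a)) ∧ (∀ a, η (η a) = a) ∧ (∀ a, η (φ a) = φ (η a)) ∧
  (∀ a, η (ψ a) = ψ a) ∧ (∀ a, φ (φ a) = a) ∧
  (∀ a, ψ a = φ (ψ a) + ψ (ψ a)) ∧ (∀ a, φ (ψ (η a)) = - ψ a)

/-- `σ` is a symmetric rack 2-cocycle: conditions (F1)–(F3). -/
def IsZ2 {X A : Type*} [AddCommGroup A] (op : X → X → X) (rho : X → X)
    (φ ψ η : A →+ A) (σ : X → X → A) : Prop :=
  (∀ x y z, σ (op x y) z + φ (σ x y) = φ (σ x z) + σ (op x z) (op y z) + ψ (σ y z)) ∧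
  (∀ x y, σ (rho x) y = η (σ x y)) ∧
  (∀ x y, φ (σ (op x y) (rho y)) = - σ x y)

/-- `σ` is a symmetric rack 2-coboundary. -/
def IsB2 {X A : Type*} [AddCommGroup A] (op : X → X → X) (rho : X → X)
    (φ ψ η : A →+ A) (σ : X → X → A) : Prop :=
  ∃ lam : X → A, (∀ x, lam (rho x) = η (lam x)) ∧
    ∀ x y, σ x y = φ (lam x) - lam (op x y) + ψ (lam y)

/-- `lam` is a symmetric rack 1-cocycle. -/
def IsZ1 {X A : Type*} [AddCommGroup A] (op : X → X → X) (rho : X → X)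
    (φ ψ η : A →+ A) (lam : X → A) : Prop :=
  (∀ x y, φ (lam x) - lam (op x y) + ψ (lam y) = 0) ∧
  (∀ x, lam (rho x) = η (lam x))

/-- `ζ` is an automorphism of the symmetric rack `(X, op, rho)`. -/
def IsAutX {X : Type*} (op : X → X → X) (rho : X → X) (ζ : X ≃ X) : Prop :=
  (∀ x y, ζ (op x y) = op (ζ x) (ζ y)) ∧ (∀ x, ζ (rho x) = rho (ζ x))

/-- `θ` is a `ℤ(X,ρ)`-module automorphism of `A`: an additive automorphism commuting
with `φ`, `ψ` and `η`. -/
def IsAutM {A : Type*} [AddCommGroup A] (φ ψ η : A →+ A) (θ : A ≃+ A) : Prop :=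
  (∀ a, θ (φ a) = φ (θ a)) ∧ (∀ a, θ (ψ a) = ψ (θ a)) ∧ (∀ a, θ (η a) = η (θ a))

/-- The action `(^{(ζ,θ)}σ)(x,y) = θ (σ (ζ⁻¹ x) (ζ⁻¹ y))`. -/
def actCocycle {X A : Type*} [AddCommGroup A] (ζ : X ≃ X) (θ : A ≃+ A)
    (σ : X → X → A) : X → X → A :=
  fun x y => θ (σ (ζ.symm x) (ζ.symm y))

/-- The rack operation of the abelian extension `E(F,α)` on `X × A`:
`(x,a)*(y,b) = (x*y, φ a + ψ b + α x y)`. -/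
def extOp {X A : Type*} [AddCommGroup A] (op : X → X → X) (φ ψ : A →+ A)
    (α : X → X → A) : X × A → X × A → X × A :=
  fun p q => (op p.1 q.1, φ p.2 + ψ q.2 + α p.1 q.1)

/-- The good involution of the abelian extension: `ρ_E(x,a) = (ρ x, η a)`. -/
def extRho {X A : Type*} [AddCommGroup A] (rho : X → X) (η : A →+ A) :
    X × A → X × A :=
  fun p => (rho p.1, η p.2)

/-- `ξ` belongs to `Aut_A(E(F,α))`: it is a symmetric rack automorphism of the abelian
extension `E(F,α)` of the form `ξ(x,a) = (ζ x, λ x + θ a)` for some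
`(ζ,θ) ∈ Aut(X,ρ) × Aut(A)` and some `λ : X → A`. -/
def MemAutAE {X A : Type*} [AddCommGroup A] (op : X → X → X) (rho : X → X)
    (φ ψ η : A →+ A) (α : X → X → A) (ξ : X × A → X × A) : Prop :=
  Function.Bijective ξ ∧
  (∀ p q, ξ (extOp op φ ψ α p q) = extOp op φ ψ α (ξ p) (ξ q)) ∧
  (∀ p, ξ (extRho rho η p) = extRho rho η (ξ p)) ∧
  ∃ (ζ : X ≃ X) (θ : A ≃+ A) (lam : X → A),
    IsAutX op rho ζ ∧ IsAutM φ ψ η θ ∧ ∀ x a, ξ (x, a) = (ζ x, lam x + θ a)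


section Helpers
variable {X A : Type*} [AddCommGroup A]

/-- Two explicit formulas for the same map agree pointwise. -/
lemma formula_eq {ζ ζ₀ : X ≃ X} {θ θ₀ : A ≃+ A} {lam lam₀ : X → A}
    {ξ : X × A → X × A}
    (hf : ∀ x a, ξ (x, a) = (ζ x, lam x + θ a))
    (hf₀ : ∀ x a, ξ (x, a) = (ζ₀ x, lam₀ x + θ₀ a)) (x : X) (a : A) :
    ζ x = ζ₀ x ∧ lam x = lam₀ x ∧ θ a = θ₀ a := by
  have h1 := (hf x 0).symm.trans (hf₀ x 0)
  have h2 := (hf x a).symm.trans (hf₀ x a)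
  have hz : ζ x = ζ₀ x := congrArg Prod.fst h1
  have hl : lam x = lam₀ x := by
    have := congrArg Prod.snd h1
    simpa using this
  refine ⟨hz, hl, ?_⟩
  have := congrArg Prod.snd h2
  simp only [hl] at this
  exact add_left_cancel this

lemma isAutX_symm {op : X → X → X} {rho : X → X} {ζ : X ≃ X}
    (h : IsAutX op rho ζ) : IsAutX op rho ζ.symm := by
  constructor
  · intro x y
    apply ζ.injective
    rw [h.1, ζ.apply_symm_apply, ζ.apply_symm_apply, ζ.apply_symm_apply]
  · intro x
    apply ζ.injective
    rw [h.2, ζ.apply_symm_apply, ζ.apply_symm_apply]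

lemma isAutM_symm {φ ψ η : A →+ A} {θ : A ≃+ A}
    (h : IsAutM φ ψ η θ) : IsAutM φ ψ η θ.symm := by
  refine ⟨fun a => ?_, fun a => ?_, fun a => ?_⟩ <;>
  · apply θ.injective
    first
    | rw [h.1 (θ.symm a), θ.apply_symm_apply, θ.apply_symm_apply]
    | rw [h.2.1 (θ.symm a), θ.apply_symm_apply, θ.apply_symm_apply]
    | rw [h.2.2 (θ.symm a), θ.apply_symm_apply, θ.apply_symm_apply]

end Helpers

/-- `Aut_A(E(F,α))` is a subgroup of the group of all symmetric rack
automorphisms of `E(F,α)`: it contains the identity, it is closed under composition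
(with the explicit formula for the composite), and it contains the explicit inverse
`ξ̄(x,a) = (ζ⁻¹ x, θ⁻¹(−λ(ζ⁻¹ x) + a))` of each of its elements. -/
theorem statement14 {X A : Type*} [AddCommGroup A] (op : X → X → X) (rho : X → X)
    (φ ψ η : A →+ A) (hsr : IsSymRack op rho) (hmod : IsConstModule φ ψ η)
    (α : X → X → A) (hα : IsZ2 op rho φ ψ η α) :
    -- identity:
    MemAutAE op rho φ ψ η α id ∧
    -- composition, with explicit formula:
    (∀ (ξ ξ' : X × A → X × A) (ζ ζ' : X ≃ X) (θ θ' : A ≃+ A) (lam lam' : X → A),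
      MemAutAE op rho φ ψ η α ξ → MemAutAE op rho φ ψ η α ξ' →
      (∀ x a, ξ (x, a) = (ζ x, lam x + θ a)) →
      (∀ x a, ξ' (x, a) = (ζ' x, lam' x + θ' a)) →
      MemAutAE op rho φ ψ η α (ξ ∘ ξ') ∧
      ∀ x a, (ξ ∘ ξ') (x, a) = (ζ (ζ' x), (lam (ζ' x) + θ (lam' x)) + θ (θ' a))) ∧
    -- inverses, with explicit formula:
    (∀ (ξ : X × A → X × A) (ζ : X ≃ X) (θ : A ≃+ A) (lam : X → A),
      MemAutAE op rho φ ψ η α ξ →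
      (∀ x a, ξ (x, a) = (ζ x, lam x + θ a)) →
      MemAutAE op rho φ ψ η α
        (fun p : X × A => (ζ.symm p.1, θ.symm (-(lam (ζ.symm p.1)) + p.2))) ∧
      (fun p : X × A => (ζ.symm p.1, θ.symm (-(lam (ζ.symm p.1)) + p.2))) ∘ ξ = id ∧
      ξ ∘ (fun p : X × A => (ζ.symm p.1, θ.symm (-(lam (ζ.symm p.1)) + p.2))) = id) := by
  obtain ⟨hsr1, hsr2, hsr3, hsr4, hsr5⟩ := hsr
  refine ⟨?_, ?_, ?_⟩
  · -- identity
    refine ⟨Function.bijective_id, fun p q => rfl, fun p => rfl,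
      Equiv.refl X, AddEquiv.refl A, fun _ => 0,
      ⟨fun x y => rfl, fun x => rfl⟩, ⟨fun a => rfl, fun a => rfl, fun a => rfl⟩,
      fun x a => by simp⟩
  · -- composition
    intro ξ ξ' ζ ζ' θ θ' lam lam' hξ hξ' hf hf'
    obtain ⟨hb, hop, hrho, ζ₀, θ₀, lam₀, hX₀, hM₀, hf₀⟩ := hξ
    obtain ⟨hb', hop', hrho', ζ₀', θ₀', lam₀', hX₀', hM₀', hf₀'⟩ := hξ'
    constructor
    · refine ⟨hb.comp hb', fun p q => ?_, fun p => ?_,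
        ζ₀'.trans ζ₀, θ₀'.trans θ₀, fun x => lam₀ (ζ₀' x) + θ₀ (lam₀' x),
        ⟨fun x y => ?_, fun x => ?_⟩,
        ⟨fun a => ?_, fun a => ?_, fun a => ?_⟩, fun x a => ?_⟩
      · simp only [Function.comp_apply, hop', hop]
      · simp only [Function.comp_apply, hrho', hrho]
      · simp only [Equiv.trans_apply, hX₀'.1, hX₀.1]
      · simp only [Equiv.trans_apply, hX₀'.2, hX₀.2]
      · simp only [AddEquiv.trans_apply, hM₀'.1, hM₀.1]
      · simp only [AddEquiv.trans_apply, hM₀'.2.1, hM₀.2.1]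
      · simp only [AddEquiv.trans_apply, hM₀'.2.2, hM₀.2.2]
      · simp only [Function.comp_apply, hf₀', hf₀, Equiv.trans_apply,
          AddEquiv.trans_apply, map_add, add_assoc]
    · intro x a
      simp only [Function.comp_apply, hf', hf, map_add, add_assoc]
  · -- inverse
    intro ξ ζ θ lam hξ hf
    obtain ⟨hb, hop, hrho, ζ₀, θ₀, lam₀, hX₀, hM₀, hf₀⟩ := hξ
    set ξb : X × A → X × A :=
      fun p : X × A => (ζ.symm p.1, θ.symm (-(lam (ζ.symm p.1)) + p.2)) with hξb
    have hleft : ξb ∘ ξ = id := by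
      funext p
      obtain ⟨x, a⟩ := p
      simp only [Function.comp_apply, hf, hξb, Equiv.symm_apply_apply, id_eq]
      rw [neg_add_cancel_left, AddEquiv.symm_apply_apply]
    have hright : ξ ∘ ξb = id := by
      funext p
      obtain ⟨x, a⟩ := p
      simp only [Function.comp_apply, hξb, hf, Equiv.apply_symm_apply, id_eq,
        AddEquiv.apply_symm_apply]
      rw [add_neg_cancel_left]
    have hbij : Function.Bijective ξb :=
      Function.bijective_iff_has_inverse.2
        ⟨ξ, congrFun hright, congrFun hleft⟩
    refine ⟨⟨hbij, fun p q => ?_, fun p => ?_,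
      ζ₀.symm, θ₀.symm, fun x => θ₀.symm (-(lam₀ (ζ₀.symm x))),
      isAutX_symm hX₀, isAutM_symm hM₀, fun x a => ?_⟩, hleft, hright⟩
    · have h1 : p = ξ (ξb p) := (congrFun hright p).symm
      have h2 : q = ξ (ξb q) := (congrFun hright q).symm
      conv_lhs => rw [h1, h2, ← hop]
      exact congrFun hleft _
    · have h1 : p = ξ (ξb p) := (congrFun hright p).symm
      conv_lhs => rw [h1, ← hrho]
      exact congrFun hleft _
    · -- explicit formula with witnesses ζ₀, θ₀
      have key := fun (y : X) (b : A) => formula_eq hf hf₀ y b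
      have hz : ∀ y, ζ y = ζ₀ y := fun y => (key y 0).1
      have hl : ∀ y, lam y = lam₀ y := fun y => (key y 0).2.1
      have hth : ∀ b, θ b = θ₀ b := fun b => (key x b).2.2
      have hzs : ζ.symm x = ζ₀.symm x := by
        apply ζ₀.injective
        rw [← hz, ζ.apply_symm_apply, ζ₀.apply_symm_apply]
      have hths : ∀ b, θ.symm b = θ₀.symm b := by
        intro b
        apply θ₀.injective
        rw [← hth, θ.apply_symm_apply, θ₀.apply_symm_apply]
      simp only [hξb, hzs, hl, hths, map_add, Prod.mk.injEq]
end

section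
/- Let (X,ρ) be a symmetric rack, A a ℤ(X,ρ)-module with constant structure maps φ, ψ, η, and α ∈ Z²_SR((X,ρ);A). For (ζ,θ) ∈ Aut(X,ρ) × Aut(A), there exists ξ ∈ Aut_A(E(F,α)) with Γ(ξ) = (ζ,θ) if and only if ^{(ζ,θ)}α − α ∈ B²_SR((X,ρ);A), i.e. the image of Γ equals the stabilizer (Aut(X,ρ) × Aut(A))_{[α]} of the cohomology class [α] in H²_SR((X,ρ);A). -/
/-- a pair `(ζ,θ) ∈ Aut(X,ρ) × Aut(A)` lifts to some
`ξ ∈ Aut_A(E(F,α))` with `Γ(ξ) = (ζ,θ)` if and only if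
`^{(ζ,θ)}α − α ∈ B²_SR((X,ρ);A)`; i.e. `Im(Γ)` is the stabilizer
`(Aut(X,ρ) × Aut(A))_{[α]}` of the class `[α]`. -/
theorem statement15 {X A : Type*} [AddCommGroup A] (op : X → X → X) (rho : X → X)
    (φ ψ η : A →+ A) (hsr : IsSymRack op rho) (hmod : IsConstModule φ ψ η)
    (α : X → X → A) (hα : IsZ2 op rho φ ψ η α)
    (ζ : X ≃ X) (hζ : IsAutX op rho ζ) (θ : A ≃+ A) (hθ : IsAutM φ ψ η θ) :
    (∃ (ξ : X × A → X × A) (lam : X → A),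
      MemAutAE op rho φ ψ η α ξ ∧ ∀ x a, ξ (x, a) = (ζ x, lam x + θ a))
      ↔ IsB2 op rho φ ψ η (fun x y => actCocycle ζ θ α x y - α x y) := by
  obtain ⟨hζop, hζρ⟩ := hζ
  obtain ⟨hθφ, hθψ, hθη⟩ := hθ
  have hζsρ : ∀ x, ζ.symm (rho x) = rho (ζ.symm x) := by
    intro x
    apply ζ.injective
    rw [ζ.apply_symm_apply, hζρ, ζ.apply_symm_apply]
  have hζsop : ∀ x y, ζ.symm (op x y) = op (ζ.symm x) (ζ.symm y) := by
    intro x y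
    apply ζ.injective
    rw [ζ.apply_symm_apply, hζop, ζ.apply_symm_apply, ζ.apply_symm_apply]
  constructor
  · rintro ⟨ξ, lam, ⟨hbij, hop, hρ, -⟩, hform⟩
    -- key identity from the operation compatibility at (x,0), (y,0)
    have key : ∀ x y, lam (op x y) + θ (α x y)
        = φ (lam x) + ψ (lam y) + α (ζ x) (ζ y) := by
      intro x y
      have h := hop (x, 0) (y, 0)
      simp only [extOp, hform, map_zero, zero_add, add_zero] at h
      have := congrArg Prod.snd h
      simpa using this
    have keyρ : ∀ x, lam (rho x) = η (lam x) := by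
      intro x
      have h := hρ (x, 0)
      simp only [extRho, hform, map_zero, add_zero] at h
      have := congrArg Prod.snd h
      simpa using this
    refine ⟨fun x => lam (ζ.symm x), ?_, ?_⟩
    · intro x
      show lam (ζ.symm (rho x)) = η (lam (ζ.symm x))
      rw [hζsρ, keyρ]
    · intro x y
      simp only [actCocycle]
      have k := key (ζ.symm x) (ζ.symm y)
      rw [ζ.apply_symm_apply, ζ.apply_symm_apply] at k
      have k2 : θ (α (ζ.symm x) (ζ.symm y))
          = φ (lam (ζ.symm x)) + ψ (lam (ζ.symm y)) + α x y
            - lam (op (ζ.symm x) (ζ.symm y)) := by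
        rw [eq_sub_iff_add_eq, add_comm]
        exact k
      rw [k2, hζsop]
      abel
  · rintro ⟨lam', hlρ, hlc⟩
    refine ⟨fun p => (ζ p.1, lam' (ζ p.1) + θ p.2), fun x => lam' (ζ x),
      ⟨?_, ?_, ?_, ζ, θ, fun x => lam' (ζ x), ⟨hζop, hζρ⟩, ⟨hθφ, hθψ, hθη⟩,
        fun x a => rfl⟩, fun x a => rfl⟩
    · refine Function.bijective_iff_has_inverse.mpr
        ⟨fun q => (ζ.symm q.1, θ.symm (q.2 - lam' q.1)), ?_, ?_⟩
      · rintro ⟨x, a⟩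
        simp
      · rintro ⟨y, b⟩
        simp
    · rintro ⟨x, a⟩ ⟨y, b⟩
      simp only [extOp]
      refine Prod.ext (hζop x y) ?_
      simp only
      have k := hlc (ζ x) (ζ y)
      simp only [actCocycle, ζ.symm_apply_apply] at k
      rw [← hζop] at k
      have k2 : θ (α x y)
          = φ (lam' (ζ x)) + ψ (lam' (ζ y)) + α (ζ x) (ζ y)
            - lam' (ζ (op x y)) := by
        rw [eq_sub_iff_add_eq]
        rw [sub_eq_iff_eq_add] at k
        rw [add_comm, ← sub_eq_iff_eq_add, k]
        abel
      rw [map_add, map_add, map_add, map_add, hθφ, hθψ, k2]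
      abel
    · rintro ⟨x, a⟩
      simp only [extRho]
      refine Prod.ext (hζρ x) ?_
      simp only
      rw [hζρ x, hlρ, map_add, hθη]
end

section
/- Let (X,ρ) be a symmetric rack, A a ℤ(X,ρ)-module with constant structure maps φ, ψ, η, and α ∈ Z²_SR((X,ρ);A). Then the kernel of Γ: Aut_A(E(F,α)) → Aut(X,ρ) × Aut(A) is isomorphic as a group to Z¹_SR((X,ρ);A). Explicitly, Ker(Γ) consists exactly of the maps ξ of the form ξ(x,a) = (x, λ(x) + a) with λ ∈ Z¹_SR((X,ρ);A), and the map Θ: Ker(Γ) → Z¹_SR((X,ρ);A) sending ξ to λ is a group isomorphism. -/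
/-- the kernel of `Γ : Aut_A(E(F,α)) → Aut(X,ρ) × Aut(A)` is isomorphic
to `Z¹_SR((X,ρ);A)`: `Ker(Γ)` consists exactly of the maps `ξ(x,a) = (x, λ x + a)` with
`λ ∈ Z¹_SR((X,ρ);A)`, and the correspondence `Θ : ξ ↦ λ` is a group isomorphism. -/
theorem statement16 {X A : Type*} [AddCommGroup A] (op : X → X → X) (rho : X → X)
    (φ ψ η : A →+ A) (hsr : IsSymRack op rho) (hmod : IsConstModule φ ψ η)
    (α : X → X → A) (hα : IsZ2 op rho φ ψ η α) :
    -- Ker(Γ) consists exactly of the maps (x,a) ↦ (x, λ x + a) with λ a 1-cocycle: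
    (∀ ξ : X × A → X × A,
      (MemAutAE op rho φ ψ η α ξ ∧ ∃ lam : X → A, ∀ x a, ξ (x, a) = (x, lam x + a))
        ↔ ∃ lam : X → A, IsZ1 op rho φ ψ η lam ∧ ∀ x a, ξ (x, a) = (x, lam x + a)) ∧
    -- Θ is a group homomorphism: composition corresponds to addition of 1-cocycles:
    (∀ lam lam' : X → A, IsZ1 op rho φ ψ η lam → IsZ1 op rho φ ψ η lam' →
      ((fun p : X × A => (p.1, lam p.1 + p.2)) ∘ fun p : X × A => (p.1, lam' p.1 + p.2))
        = fun p : X × A => (p.1, (lam p.1 + lam' p.1) + p.2)) ∧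
    -- Θ is injective:
    (∀ lam lam' : X → A, IsZ1 op rho φ ψ η lam → IsZ1 op rho φ ψ η lam' →
      (fun p : X × A => (p.1, lam p.1 + p.2)) = (fun p : X × A => (p.1, lam' p.1 + p.2)) →
      lam = lam') := by
  refine ⟨fun ξ => ?_, fun lam lam' _ _ => ?_, fun lam lam' _ _ h => ?_⟩
  · constructor
    · rintro ⟨⟨_, hop, hrho, _⟩, lam, hξ⟩
      refine ⟨lam, ⟨fun x y => ?_, fun x => ?_⟩, hξ⟩
      · have := hop (x, 0) (y, 0)
        simp only [extOp, hξ] at this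
        have h2 := congrArg Prod.snd this
        simp only [map_add, map_zero, add_zero, zero_add] at h2
        rw [add_right_cancel h2]; abel
      · have := hrho (x, 0)
        simp only [extRho, hξ] at this
        have h2 := congrArg Prod.snd this
        simp only [map_add, map_zero, add_zero] at h2
        rw [h2]
    · rintro ⟨lam, ⟨hz1, hz2⟩, hξ⟩
      have hξ' : ∀ p : X × A, ξ p = (p.1, lam p.1 + p.2) := fun p => hξ p.1 p.2
      refine ⟨⟨?_, fun p q => ?_, fun p => ?_,
        Equiv.refl X, AddEquiv.refl A, lam, ⟨fun _ _ => rfl, fun _ => rfl⟩,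
        ⟨fun _ => rfl, fun _ => rfl, fun _ => rfl⟩, fun x a => hξ x a⟩, lam, hξ⟩
      · have : Function.LeftInverse (fun p : X × A => (p.1, p.2 - lam p.1)) ξ := by
          intro p; rw [hξ']; simp
        refine ⟨this.injective, fun p => ⟨(p.1, p.2 - lam p.1), ?_⟩⟩
        rw [hξ']; simp
      · simp only [extOp, hξ']
        have := hz1 p.1 q.1
        refine Prod.ext rfl ?_
        simp only [map_add]
        have : lam (op p.1 q.1) = φ (lam p.1) + ψ (lam q.1) := by
          have h := hz1 p.1 q.1
          linear_combination (norm := abel) -h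
        rw [this]; abel
      · simp only [extRho, hξ', map_add, hz2]
    all_goals skip
  · funext p
    simp only [Function.comp]
    refine Prod.ext rfl ?_
    abel
  · funext x
    have := congrFun h (x, 0)
    simpa using this
end

section
/- (Wells-type exact sequence for symmetric racks.) Let (X,ρ) be a symmetric rack, A a ℤ(X,ρ)-module with constant structure maps φ, ψ, η, and α ∈ Z²_SR((X,ρ);A). Then there is an exact sequence of groups 0 → Z¹_SR((X,ρ);A) → Aut_A(E(F,α)) →^Γ Aut(X,ρ) × Aut(A) →^{Λ_{[α]}} H²_SR((X,ρ);A). Precisely: (i) Γ is a group homomorphism; (ii) the map Θ: Ker(Γ) → Z¹_SR((X,ρ);A), sending ξ(x,a) = (x, λ(x)+a) to λ, is a group isomorphism (so Z¹_SR embeds into Aut_A(E(F,α)) with image Ker(Γ)); (iii) the image of Γ equals {(ζ,θ) ∈ Aut(X,ρ) × Aut(A) : ^{(ζ,θ)}α − α ∈ B²_SR((X,ρ);A)}, which is Λ_{[α]}⁻¹(0) for the map Λ_{[α]}(ζ,θ) = [α] − [^{(ζ,θ)}α]. -/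
section Helpers

variable {X A : Type*} [AddCommGroup A]

/-- If `ξ(x,a) = (ζ x, lam x + θ a)` with `ζ, θ` automorphisms and `lam` satisfying the
two compatibility equations, then `ξ ∈ Aut_A(E(F,α))`. -/
theorem mem_of_form (op : X → X → X) (rho : X → X) (φ ψ η : A →+ A) (α : X → X → A)
    (ζ : X ≃ X) (θ : A ≃+ A) (lam : X → A)
    (hζ : IsAutX op rho ζ) (hθ : IsAutM φ ψ η θ)
    (L1 : ∀ x y, lam (op x y) + θ (α x y) = φ (lam x) + ψ (lam y) + α (ζ x) (ζ y))
    (L2 : ∀ x, lam (rho x) = η (lam x)) :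
    MemAutAE op rho φ ψ η α (fun p => (ζ p.1, lam p.1 + θ p.2)) := by
  refine ⟨?_, ?_, ?_, ζ, θ, lam, hζ, hθ, fun x a => rfl⟩
  · rw [Function.bijective_iff_has_inverse]
    refine ⟨fun p => (ζ.symm p.1, θ.symm (p.2 - lam (ζ.symm p.1))), fun p => ?_, fun p => ?_⟩
    · obtain ⟨x, a⟩ := p
      simp
    · obtain ⟨x, a⟩ := p
      simp [add_sub_cancel]
  · rintro ⟨x, a⟩ ⟨y, b⟩
    have h2 : lam (op x y) = φ (lam x) + ψ (lam y) + α (ζ x) (ζ y) - θ (α x y) :=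
      eq_sub_of_add_eq (L1 x y)
    simp only [extOp, Prod.mk.injEq]
    refine ⟨hζ.1 x y, ?_⟩
    simp only [map_add, hθ.1, hθ.2.1, h2]
    abel
  · rintro ⟨x, a⟩
    simp only [extRho, Prod.mk.injEq]
    exact ⟨hζ.2 x, by simp only [map_add, L2, hθ.2.2]⟩

/-- Extraction: membership plus the explicit form gives the compatibility equations. -/
theorem eqs_of_mem (op : X → X → X) (rho : X → X) (φ ψ η : A →+ A) (α : X → X → A)
    (ξ : X × A → X × A) (ζ : X ≃ X) (θ : A ≃+ A) (lam : X → A)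
    (hm : MemAutAE op rho φ ψ η α ξ)
    (hform : ∀ x a, ξ (x, a) = (ζ x, lam x + θ a)) :
    (∀ x y, lam (op x y) + θ (α x y) = φ (lam x) + ψ (lam y) + α (ζ x) (ζ y)) ∧
    (∀ x, lam (rho x) = η (lam x)) := by
  constructor
  · intro x y
    have h := hm.2.1 (x, 0) (y, 0)
    simp only [extOp, hform, map_zero, add_zero, zero_add, Prod.mk.injEq] at h
    exact h.2
  · intro x
    have h := hm.2.2.1 (x, 0)
    simp only [extRho, hform, map_zero, add_zero, Prod.mk.injEq] at h
    exact h.2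

end Helpers

/-- Wells-type exact sequence for symmetric racks: there is an exact
sequence `0 → Z¹_SR((X,ρ);A) → Aut_A(E(F,α)) →^Γ Aut(X,ρ) × Aut(A) →^{Λ_[α]} H²_SR`.
(i) `Γ` is a group homomorphism; (ii) `Ker(Γ) ≅ Z¹_SR((X,ρ);A)` via `ξ ↦ λ`;
(iii) `Im(Γ) = {(ζ,θ) : ^{(ζ,θ)}α − α ∈ B²_SR((X,ρ);A)} = Λ_[α]⁻¹(0)`. -/
theorem statement17 {X A : Type*} [AddCommGroup A] (op : X → X → X) (rho : X → X)
    (φ ψ η : A →+ A) (hsr : IsSymRack op rho) (hmod : IsConstModule φ ψ η)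
    (α : X → X → A) (hα : IsZ2 op rho φ ψ η α) :
    -- (i) Γ is a group homomorphism:
    (∀ (ξ ξ' : X × A → X × A) (ζ ζ' : X ≃ X) (θ θ' : A ≃+ A) (lam lam' : X → A),
      MemAutAE op rho φ ψ η α ξ → MemAutAE op rho φ ψ η α ξ' →
      (∀ x a, ξ (x, a) = (ζ x, lam x + θ a)) →
      (∀ x a, ξ' (x, a) = (ζ' x, lam' x + θ' a)) →
      MemAutAE op rho φ ψ η α (ξ ∘ ξ') ∧
      ∃ lam'' : X → A, ∀ x a, (ξ ∘ ξ') (x, a) = (ζ (ζ' x), lam'' x + θ (θ' a))) ∧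
    -- (ii) Ker(Γ) ≅ Z¹_SR((X,ρ);A):
    (∀ ξ : X × A → X × A,
      (MemAutAE op rho φ ψ η α ξ ∧ ∃ lam : X → A, ∀ x a, ξ (x, a) = (x, lam x + a))
        ↔ ∃ lam : X → A, IsZ1 op rho φ ψ η lam ∧ ∀ x a, ξ (x, a) = (x, lam x + a)) ∧
    (∀ lam lam' : X → A, IsZ1 op rho φ ψ η lam → IsZ1 op rho φ ψ η lam' →
      ((fun p : X × A => (p.1, lam p.1 + p.2)) ∘ fun p : X × A => (p.1, lam' p.1 + p.2))
        = fun p : X × A => (p.1, (lam p.1 + lam' p.1) + p.2)) ∧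
    -- (iii) exactness at Aut(X,ρ) × Aut(A): Im(Γ) = Λ_[α]⁻¹(0):
    (∀ (ζ : X ≃ X) (θ : A ≃+ A), IsAutX op rho ζ → IsAutM φ ψ η θ →
      ((∃ (ξ : X × A → X × A) (lam : X → A),
          MemAutAE op rho φ ψ η α ξ ∧ ∀ x a, ξ (x, a) = (ζ x, lam x + θ a))
        ↔ IsB2 op rho φ ψ η (fun x y => actCocycle ζ θ α x y - α x y))) := by
  refine ⟨?_, ?_, ?_, ?_⟩
  · -- (i)
    intro ξ ξ' ζ ζ' θ θ' lam lam' hm hm' hf hf'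
    constructor
    · obtain ⟨ζ₀, θ₀, lam₀, hζ₀, hθ₀, hform₀⟩ := hm.2.2.2
      obtain ⟨ζ₁, θ₁, lam₁, hζ₁, hθ₁, hform₁⟩ := hm'.2.2.2
      refine ⟨hm.1.comp hm'.1, fun p q => ?_, fun p => ?_,
        ζ₁.trans ζ₀, θ₁.trans θ₀, fun x => lam₀ (ζ₁ x) + θ₀ (lam₁ x), ?_, ?_, ?_⟩
      · simp only [Function.comp_apply, hm'.2.1, hm.2.1]
      · simp only [Function.comp_apply, hm'.2.2.1, hm.2.2.1]
      · exact ⟨fun x y => by simp [Equiv.trans_apply, hζ₁.1, hζ₀.1],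
          fun x => by simp [Equiv.trans_apply, hζ₁.2, hζ₀.2]⟩
      · exact ⟨fun a => by simp [AddEquiv.trans_apply, hθ₁.1, hθ₀.1],
          fun a => by simp [AddEquiv.trans_apply, hθ₁.2.1, hθ₀.2.1],
          fun a => by simp [AddEquiv.trans_apply, hθ₁.2.2, hθ₀.2.2]⟩
      · intro x a
        simp only [Function.comp_apply, hform₁, hform₀, Equiv.trans_apply,
          AddEquiv.trans_apply, map_add, add_assoc]
    · refine ⟨fun x => lam (ζ' x) + θ (lam' x), fun x a => ?_⟩
      simp only [Function.comp_apply, hf', hf, map_add, add_assoc]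
  · -- (ii) kernel description
    intro ξ
    constructor
    · rintro ⟨hm, lam, hform⟩
      have h := eqs_of_mem op rho φ ψ η α ξ (Equiv.refl X) (AddEquiv.refl A) lam hm hform
      refine ⟨lam, ⟨fun x y => ?_, h.2⟩, hform⟩
      have h1 := h.1 x y
      simp only [Equiv.refl_apply, AddEquiv.refl_apply] at h1
      have h2 := add_right_cancel h1
      rw [h2]
      abel
    · rintro ⟨lam, hz, hform⟩
      refine ⟨?_, lam, hform⟩
      have hmem := mem_of_form op rho φ ψ η α (Equiv.refl X) (AddEquiv.refl A) lam
        ⟨fun x y => rfl, fun x => rfl⟩ ⟨fun a => rfl, fun a => rfl, fun a => rfl⟩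
        (fun x y => by
          have h := hz.1 x y
          rw [sub_add_eq_add_sub, sub_eq_zero] at h
          simp only [Equiv.refl_apply, AddEquiv.refl_apply]
          rw [h]) hz.2
      have hξ : ξ = fun p : X × A => ((Equiv.refl X) p.1, lam p.1 + (AddEquiv.refl A) p.2) := by
        funext p
        obtain ⟨x, a⟩ := p
        exact hform x a
      rw [hξ]
      exact hmem
  · -- (ii) group structure on the kernel
    intro lam lam' _ _
    funext p
    simp [add_assoc]
  · -- (iii)
    intro ζ θ hζ hθ
    constructor
    · rintro ⟨ξ, lam, hm, hform⟩
      obtain ⟨L1, L2⟩ := eqs_of_mem op rho φ ψ η α ξ ζ θ lam hm hform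
      have hops : ∀ x y, ζ.symm (op x y) = op (ζ.symm x) (ζ.symm y) := fun x y =>
        ζ.injective (by
          rw [Equiv.apply_symm_apply, hζ.1, Equiv.apply_symm_apply, Equiv.apply_symm_apply])
      have hrhos : ∀ x, ζ.symm (rho x) = rho (ζ.symm x) := fun x =>
        ζ.injective (by rw [Equiv.apply_symm_apply, hζ.2, Equiv.apply_symm_apply])
      refine ⟨fun x => lam (ζ.symm x), fun x => by show lam (ζ.symm (rho x)) = η (lam (ζ.symm x)); rw [hrhos, L2], fun x y => ?_⟩
      have h := L1 (ζ.symm x) (ζ.symm y)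
      rw [Equiv.apply_symm_apply, Equiv.apply_symm_apply, add_comm] at h
      have h' := eq_sub_of_add_eq h
      show θ (α (ζ.symm x) (ζ.symm y)) - α x y =
          φ (lam (ζ.symm x)) - lam (ζ.symm (op x y)) + ψ (lam (ζ.symm y))
      rw [hops, h']
      abel
    · rintro ⟨μ, hμρ, hμc⟩
      refine ⟨fun p => (ζ p.1, μ (ζ p.1) + θ p.2), fun x => μ (ζ x), ?_, fun x a => rfl⟩
      refine mem_of_form op rho φ ψ η α ζ θ (fun x => μ (ζ x)) hζ hθ (fun x y => ?_)
        (fun x => by show μ (ζ (rho x)) = η (μ (ζ x)); rw [hζ.2, hμρ])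
      have h := hμc (ζ x) (ζ y)
      simp only [actCocycle, Equiv.symm_apply_apply] at h
      rw [← hζ.1] at h
      have h' := eq_add_of_sub_eq h
      rw [h']
      abel
end

section
/- Let (X,ρ) be a symmetric rack, A a ℤ(X,ρ)-module with constant structure maps φ, ψ, η, and α ∈ Z²_SR((X,ρ);A). Then there is a short exact sequence of groups 0 → Z¹_SR((X,ρ);A) → Aut_A(E(F,α)) →^Γ (Aut(X,ρ) × Aut(A))_{[α]} → 0; that is, Γ restricts to a surjective group homomorphism from Aut_A(E(F,α)) onto the stabilizer (Aut(X,ρ) × Aut(A))_{[α]} = {(ζ,θ) : ^{(ζ,θ)}α − α ∈ B²_SR((X,ρ);A)}, and its kernel is isomorphic to Z¹_SR((X,ρ);A). -/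
/-- short exact sequence
`0 → Z¹_SR((X,ρ);A) → Aut_A(E(F,α)) →^Γ (Aut(X,ρ) × Aut(A))_{[α]} → 0`:
`Γ` maps `Aut_A(E(F,α))` onto the stabilizer
`{(ζ,θ) : ^{(ζ,θ)}α − α ∈ B²_SR((X,ρ);A)}` of `[α]`, and its kernel is isomorphic to
`Z¹_SR((X,ρ);A)`. -/
theorem statement18 {X A : Type*} [AddCommGroup A] (op : X → X → X) (rho : X → X)
    (φ ψ η : A →+ A) (hsr : IsSymRack op rho) (hmod : IsConstModule φ ψ η)
    (α : X → X → A) (hα : IsZ2 op rho φ ψ η α) :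
    -- surjectivity of Γ onto the stabilizer (and Im(Γ) ⊆ stabilizer):
    (∀ (ζ : X ≃ X) (θ : A ≃+ A), IsAutX op rho ζ → IsAutM φ ψ η θ →
      (IsB2 op rho φ ψ η (fun x y => actCocycle ζ θ α x y - α x y)
        ↔ ∃ (ξ : X × A → X × A) (lam : X → A),
            MemAutAE op rho φ ψ η α ξ ∧ ∀ x a, ξ (x, a) = (ζ x, lam x + θ a))) ∧
    -- the kernel of Γ is isomorphic to Z¹_SR((X,ρ);A):
    (∀ ξ : X × A → X × A,
      (MemAutAE op rho φ ψ η α ξ ∧ ∃ lam : X → A, ∀ x a, ξ (x, a) = (x, lam x + a))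
        ↔ ∃ lam : X → A, IsZ1 op rho φ ψ η lam ∧ ∀ x a, ξ (x, a) = (x, lam x + a)) ∧
    (∀ lam lam' : X → A, IsZ1 op rho φ ψ η lam → IsZ1 op rho φ ψ η lam' →
      ((fun p : X × A => (p.1, lam p.1 + p.2)) ∘ fun p : X × A => (p.1, lam' p.1 + p.2))
        = fun p : X × A => (p.1, (lam p.1 + lam' p.1) + p.2)) := by
  obtain ⟨hmφψ, hηη, hηφ, hηψ, hφφ, hψid, hφψη⟩ := hmod
  refine ⟨?_, ?_, ?_⟩
  · -- first part
    intro ζ θ hζ hθ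
    obtain ⟨hζop, hζρ⟩ := hζ
    obtain ⟨hθφ, hθψ, hθη⟩ := hθ
    constructor
    · rintro ⟨μ, hμρ, hμ⟩
      refine ⟨fun p => (ζ p.1, μ (ζ p.1) + θ p.2), fun x => μ (ζ x),
        ⟨?_, ?_, ?_, ζ, θ, fun x => μ (ζ x), ⟨hζop, hζρ⟩, ⟨hθφ, hθψ, hθη⟩,
          fun x a => rfl⟩, fun x a => rfl⟩
      · rw [Function.bijective_iff_has_inverse]
        refine ⟨fun p => (ζ.symm p.1, θ.symm (p.2 - μ p.1)), ?_, ?_⟩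
        · rintro ⟨x, a⟩
          simp
        · rintro ⟨x, a⟩
          simp
      · rintro ⟨x, a⟩ ⟨y, b⟩
        have key := hμ (ζ x) (ζ y)
        simp only [actCocycle, Equiv.symm_apply_apply] at key
        rw [← hζop] at key
        have key2 : μ (ζ (op x y)) = φ (μ (ζ x)) + ψ (μ (ζ y)) + α (ζ x) (ζ y)
            - θ (α x y) := by
          rw [sub_eq_iff_eq_add] at key
          rw [key]; abel
        simp only [extOp, Prod.mk.injEq]
        refine ⟨hζop x y, ?_⟩
        rw [key2, map_add, map_add, hθφ, hθψ, map_add, map_add]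
        abel
      · rintro ⟨x, a⟩
        simp only [extRho, Prod.mk.injEq]
        refine ⟨hζρ x, ?_⟩
        rw [hζρ, hμρ, map_add, hθη]
    · rintro ⟨ξ, lam, ⟨hbij, hhom, hρE, -⟩, hform⟩
      have hζop' : ∀ x y, ζ.symm (op x y) = op (ζ.symm x) (ζ.symm y) := by
        intro x y
        apply ζ.injective
        simp [hζop]
      have hζρ' : ∀ x, ζ.symm (rho x) = rho (ζ.symm x) := by
        intro x
        apply ζ.injective
        simp [hζρ]
      refine ⟨fun x => lam (ζ.symm x), ?_, ?_⟩
      · intro x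
        have h := congrArg Prod.snd (hρE (ζ.symm x, 0))
        simp only [extRho, hform, map_zero, add_zero, Equiv.apply_symm_apply] at h
        show lam (ζ.symm (rho x)) = η (lam (ζ.symm x))
        rw [hζρ']
        exact h
      · intro x y
        have h := congrArg Prod.snd (hhom (ζ.symm x, 0) (ζ.symm y, 0))
        simp only [extOp, hform, map_zero, add_zero, zero_add,
          Equiv.apply_symm_apply] at h
        simp only [actCocycle, hζop']
        have h2 : θ (α (ζ.symm x) (ζ.symm y)) = φ (lam (ζ.symm x)) +
            ψ (lam (ζ.symm y)) + α x y - lam (op (ζ.symm x) (ζ.symm y)) := by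
          rw [eq_sub_iff_add_eq, add_comm (θ (α (ζ.symm x) (ζ.symm y)))]
          exact h
        rw [h2]; abel
  · -- kernel characterization
    intro ξ
    constructor
    · rintro ⟨⟨hbij, hhom, hρE, -⟩, lam, hform⟩
      refine ⟨lam, ⟨?_, ?_⟩, hform⟩
      · intro x y
        have h := congrArg Prod.snd (hhom (x, 0) (y, 0))
        simp only [extOp, hform, map_zero, add_zero, zero_add] at h
        have h2 := add_right_cancel h
        rw [h2]; abel
      · intro x
        have h := congrArg Prod.snd (hρE (x, 0))
        simp only [extRho, hform, map_zero, add_zero] at h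
        exact h
    · rintro ⟨lam, ⟨hz1, hzρ⟩, hform⟩
      refine ⟨⟨?_, ?_, ?_, Equiv.refl X, AddEquiv.refl A, lam,
        ⟨fun x y => rfl, fun x => rfl⟩, ⟨fun a => rfl, fun a => rfl, fun a => rfl⟩,
        fun x a => by simpa using hform x a⟩, lam, hform⟩
      · rw [Function.bijective_iff_has_inverse]
        refine ⟨fun p => (p.1, p.2 - lam p.1), ?_, ?_⟩
        · rintro ⟨x, a⟩
          simp [hform]
        · rintro ⟨x, a⟩
          simp [hform]
      · rintro ⟨x, a⟩ ⟨y, b⟩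
        simp only [extOp, hform, Prod.mk.injEq, true_and]
        have h := hz1 x y
        rw [sub_add_eq_add_sub, sub_eq_zero] at h
        rw [map_add, map_add, ← h]
        abel
      · rintro ⟨x, a⟩
        simp only [extRho, hform, Prod.mk.injEq, true_and]
        rw [hzρ, map_add]
  · intro lam lam' _ _
    funext p
    simp [Function.comp, add_assoc]
end

section
/- (Wells-type exact sequence for symmetric quandles.) Let (X,ρ) be a symmetric quandle, A a ℤ(X,ρ)-module with constant structure maps φ, ψ, η satisfying additionally φ + ψ = id, and α ∈ Z²_SQ((X,ρ);A). Then there is an exact sequence of groups 0 → Z¹_SQ((X,ρ);A) → Aut_A(E(F,α)) →^Γ Aut(X,ρ) × Aut(A) →^{Λ_{[α]}} H²_SQ((X,ρ);A). Precisely: (i) Γ is a group homomorphism; (ii) the map Θ: Ker(Γ) → Z¹_SQ((X,ρ);A), sending ξ(x,a) = (x, λ(x)+a) to λ, is a group isomorphism; (iii) the image of Γ equals {(ζ,θ) ∈ Aut(X,ρ) × Aut(A) : ^{(ζ,θ)}α − α ∈ B²_SQ((X,ρ);A)}. -/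
private lemma aux_rearr1 {A : Type*} [AddCommGroup A] {a b c : A} (h : a - b + c = 0) :
    b = a + c := by
  have h2 : a + c - b = 0 := by
    calc a + c - b = a - b + c := by abel
    _ = 0 := h
  exact (sub_eq_zero.mp h2).symm

private lemma aux_rearr2 {A : Type*} [AddCommGroup A] {a b c d e : A}
    (h : a + b = c + d + e) : b - e = c - a + d := by
  calc b - e = a + b - a - e := by abel
  _ = c + d + e - a - e := by rw [h]
  _ = c - a + d := by abel

private lemma aux_rearr3 {A : Type*} [AddCommGroup A] {a b c d e : A}
    (h : b - e = c - a + d) : a + b = c + d + e := by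
  calc a + b = a + (b - e) + e := by abel
  _ = a + (c - a + d) + e := by rw [h]
  _ = c + d + e := by abel

/-- Wells-type exact sequence for symmetric quandles: for a symmetric
quandle `(X,ρ)` and a `ℤ(X,ρ)`-module `A` with constant structure maps satisfying
`φ + ψ = id`, and a symmetric quandle 2-cocycle `α` (a rack 2-cocycle with
`α x x = 0`), there is an exact sequence
`0 → Z¹_SQ((X,ρ);A) → Aut_A(E(F,α)) →^Γ Aut(X,ρ) × Aut(A) →^{Λ_[α]} H²_SQ`. -/
theorem statement19 {X A : Type*} [AddCommGroup A] (op : X → X → X) (rho : X → X)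
    (φ ψ η : A →+ A) (hsr : IsSymRack op rho) (hidem : ∀ x, op x x = x)
    (hmod : IsConstModule φ ψ η) (hφψ : ∀ a, φ a + ψ a = a)
    (α : X → X → A) (hα : IsZ2 op rho φ ψ η α) (hαq : ∀ x, α x x = 0) :
    -- (i) Γ is a group homomorphism:
    (∀ (ξ ξ' : X × A → X × A) (ζ ζ' : X ≃ X) (θ θ' : A ≃+ A) (lam lam' : X → A),
      MemAutAE op rho φ ψ η α ξ → MemAutAE op rho φ ψ η α ξ' →
      (∀ x a, ξ (x, a) = (ζ x, lam x + θ a)) →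
      (∀ x a, ξ' (x, a) = (ζ' x, lam' x + θ' a)) →
      MemAutAE op rho φ ψ η α (ξ ∘ ξ') ∧
      ∃ lam'' : X → A, ∀ x a, (ξ ∘ ξ') (x, a) = (ζ (ζ' x), lam'' x + θ (θ' a))) ∧
    -- (ii) Ker(Γ) ≅ Z¹_SQ((X,ρ);A):
    (∀ ξ : X × A → X × A,
      (MemAutAE op rho φ ψ η α ξ ∧ ∃ lam : X → A, ∀ x a, ξ (x, a) = (x, lam x + a))
        ↔ ∃ lam : X → A, IsZ1 op rho φ ψ η lam ∧ ∀ x a, ξ (x, a) = (x, lam x + a)) ∧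
    (∀ lam lam' : X → A, IsZ1 op rho φ ψ η lam → IsZ1 op rho φ ψ η lam' →
      ((fun p : X × A => (p.1, lam p.1 + p.2)) ∘ fun p : X × A => (p.1, lam' p.1 + p.2))
        = fun p : X × A => (p.1, (lam p.1 + lam' p.1) + p.2)) ∧
    -- (iii) Im(Γ) = {(ζ,θ) : ^{(ζ,θ)}α − α ∈ B²_SQ((X,ρ);A)}:
    (∀ (ζ : X ≃ X) (θ : A ≃+ A), IsAutX op rho ζ → IsAutM φ ψ η θ →
      ((∃ (ξ : X × A → X × A) (lam : X → A),
          MemAutAE op rho φ ψ η α ξ ∧ ∀ x a, ξ (x, a) = (ζ x, lam x + θ a))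
        ↔ IsB2 op rho φ ψ η (fun x y => actCocycle ζ θ α x y - α x y))) := by
  obtain ⟨hdist, hbij, hinvol, hrop, hopr⟩ := hsr
  refine ⟨?_, ?_, ?_, ?_⟩
  · -- (i)
    intro ξ ξ' ζ ζ' θ θ' lam lam' hm hm' hξ hξ'
    obtain ⟨hb, hop, hr, ζ₀, θ₀, lam₀, hX₀, hM₀, hf₀⟩ := hm
    obtain ⟨hb', hop', hr', ζ₀', θ₀', lam₀', hX₀', hM₀', hf₀'⟩ := hm'
    constructor
    · refine ⟨hb.comp hb', ?_, ?_, ζ₀'.trans ζ₀, θ₀'.trans θ₀,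
        fun x => lam₀ (ζ₀' x) + θ₀ (lam₀' x), ?_, ?_, ?_⟩
      · intro p q
        simp only [Function.comp_apply, hop', hop]
      · intro p
        simp only [Function.comp_apply, hr', hr]
      · exact ⟨fun x y => by simp [hX₀'.1, hX₀.1], fun x => by simp [hX₀'.2, hX₀.2]⟩
      · exact ⟨fun a => by simp [hM₀'.1, hM₀.1], fun a => by simp [hM₀'.2.1, hM₀.2.1],
          fun a => by simp [hM₀'.2.2, hM₀.2.2]⟩
      · intro x a
        simp only [Function.comp_apply, hf₀', hf₀, Equiv.trans_apply, AddEquiv.trans_apply,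
          map_add, add_assoc]
    · refine ⟨fun x => lam (ζ' x) + θ (lam' x), fun x a => ?_⟩
      simp only [Function.comp_apply, hξ', hξ, map_add, add_assoc]
  · -- (ii) kernel iso
    intro ξ
    constructor
    · rintro ⟨⟨hb, hop, hr, -⟩, lam, hξ⟩
      refine ⟨lam, ⟨?_, ?_⟩, hξ⟩
      · intro x y
        have h := hop (x, 0) (y, 0)
        simp only [extOp, map_zero, add_zero, zero_add, hξ] at h
        have h2 := congrArg Prod.snd h
        simp only at h2
        have h3 : lam (op x y) = φ (lam x) + ψ (lam y) := add_right_cancel h2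
        rw [h3]; abel
      · intro x
        have h := hr (x, 0)
        simp only [extRho, map_zero, add_zero, hξ] at h
        exact congrArg Prod.snd h
    · rintro ⟨lam, ⟨hZ1, hZρ⟩, hξ⟩
      have hξp : ∀ p : X × A, ξ p = (p.1, lam p.1 + p.2) := fun p => hξ p.1 p.2
      have hlop : ∀ x y, lam (op x y) = φ (lam x) + ψ (lam y) :=
        fun x y => aux_rearr1 (hZ1 x y)
      refine ⟨⟨?_, ?_, ?_, Equiv.refl X, AddEquiv.refl A, lam, ?_, ?_, ?_⟩, lam, hξ⟩
      · rw [Function.bijective_iff_has_inverse]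
        refine ⟨fun p => (p.1, p.2 - lam p.1), fun p => ?_, fun p => ?_⟩
        · simp [hξp]
        · simp [hξp]
      · intro p q
        ext
        · simp [hξp, extOp]
        · simp only [hξp, extOp, map_add, hlop]
          abel
      · intro p
        ext
        · simp [hξp, extRho]
        · simp only [hξp, extRho, map_add, hZρ]
      · exact ⟨fun x y => rfl, fun x => rfl⟩
      · exact ⟨fun a => rfl, fun a => rfl, fun a => rfl⟩
      · intro x a; simpa using hξ x a
  · -- (ii) composition additivity
    intro lam lam' _ _
    funext p
    simp [Function.comp, add_assoc]
  · -- (iii)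
    intro ζ θ hX hM
    have hζsop : ∀ x y, ζ.symm (op x y) = op (ζ.symm x) (ζ.symm y) := by
      intro x y
      apply ζ.injective
      simp [hX.1]
    have hζsρ : ∀ x, ζ.symm (rho x) = rho (ζ.symm x) := by
      intro x
      apply ζ.injective
      simp [hX.2]
    constructor
    · rintro ⟨ξ, lam, ⟨hb, hop, hr, -⟩, hξ⟩
      have hlρ : ∀ x, lam (rho x) = η (lam x) := by
        intro x
        have h := hr (x, 0)
        simp only [extRho, map_zero, add_zero, hξ] at h
        have h2 := congrArg Prod.snd h
        simpa using h2
      have hkey : ∀ x y, lam (op x y) + θ (α x y)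
          = φ (lam x) + ψ (lam y) + α (ζ x) (ζ y) := by
        intro x y
        have h := hop (x, 0) (y, 0)
        simp only [extOp, map_zero, add_zero, zero_add, hξ] at h
        have h2 := congrArg Prod.snd h
        simpa using h2
      refine ⟨fun x => lam (ζ.symm x), fun x => ?_, fun x y => ?_⟩
      · simp only []; rw [hζsρ, hlρ]
      · simp only [actCocycle]
        have h := hkey (ζ.symm x) (ζ.symm y)
        simp only [Equiv.apply_symm_apply] at h
        have h2 := aux_rearr2 h
        rw [← hζsop] at h2
        exact h2
    · rintro ⟨μ, hμρ, hμ⟩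
      set lam : X → A := fun x => μ (ζ x) with hlam
      have hlρ : ∀ x, lam (rho x) = η (lam x) := by
        intro x
        simp only [hlam, hX.2, hμρ]
      have hlop : ∀ x y, lam (op x y) = μ (op (ζ x) (ζ y)) := by
        intro x y
        simp only [hlam, hX.1]
      have hkey : ∀ x y, lam (op x y) + θ (α x y)
          = φ (lam x) + ψ (lam y) + α (ζ x) (ζ y) := by
        intro x y
        have h := hμ (ζ x) (ζ y)
        simp only [actCocycle, Equiv.symm_apply_apply] at h
        rw [hlop]
        exact aux_rearr3 h
      refine ⟨fun p => (ζ p.1, lam p.1 + θ p.2), lam, ⟨?_, ?_, ?_, ζ, θ, lam, hX, hM, ?_⟩,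
        fun x a => rfl⟩
      · rw [Function.bijective_iff_has_inverse]
        refine ⟨fun p => (ζ.symm p.1, θ.symm (p.2 - lam (ζ.symm p.1))), fun p => ?_,
          fun p => ?_⟩
        · simp
        · simp
      · intro p q
        ext
        · simp [extOp, hX.1]
        · simp only [extOp]
          have h := hkey p.1 q.1
          calc lam (op p.1 q.1) + θ (φ p.2 + ψ q.2 + α p.1 q.1)
              = (lam (op p.1 q.1) + θ (α p.1 q.1)) + θ (φ p.2) + θ (ψ q.2) := by
                rw [map_add, map_add]; abel
          _ = (φ (lam p.1) + ψ (lam q.1) + α (ζ p.1) (ζ q.1)) + θ (φ p.2) + θ (ψ q.2) := by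
                rw [h]
          _ = φ (lam p.1 + θ p.2) + ψ (lam q.1 + θ q.2) + α (ζ p.1) (ζ q.1) := by
                rw [map_add, map_add, hM.1, hM.2.1]; abel
      · intro p
        ext
        · simp [extRho, hX.2]
        · simp only [extRho, map_add, hlρ, hM.2.2]
      · intro x a; rfl
end
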